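/- arXiv:1706.06977 — 2 statements merged into one kernel-verified Lean document; each statement's English description precedes it below -/
import Mathlib

section
/- Let s ∈ [p] and suppose ε ∈ ℝⁿ satisfies (1/n)‖D† ε‖* ≤ 1/2, where D† is the Moore–Penrose pseudo-inverse of the incidence matrix D and ‖·‖* the dual norm of ‖·‖_Λ. Then for every v ∈ ℝⁿ with ‖v‖₂ = 1, εᵀ(I_n − Π)v + n Λ(λ,s) ‖Dᵀv‖₂ − n Σ_{j=s+1}^p λ_j |Dᵀv|^↓_j ≤ (3n/2) Λ(λ,s) / κ(s), where Π is the orthogonal projection onto ker(Dᵀ). -/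
open MeasureTheory ProbabilityTheory Matrix

/-- The non-increasing rearrangement of the amplitudes `(|θ 1|, …, |θ p|)`. -/
noncomputable def dsort {p : ℕ} (θ : Fin p → ℝ) : Fin p → ℝ :=
  fun j => |θ (Tuple.sort (fun i => |θ i|) j.rev)|

/-- The ordered ℓ1 (Slope) norm `‖θ‖_Λ = ∑ j, λ_j |θ|^↓_j`. -/
noncomputable def slopeNorm {p : ℕ} (lam θ : Fin p → ℝ) : ℝ :=
  ∑ j, lam j * dsort θ j

/-- The dual norm of the Slope norm: `‖v‖* = sup_{‖θ‖_Λ ≤ 1} ⟨v, θ⟩`. -/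
noncomputable def dualSlopeNorm {p : ℕ} (lam v : Fin p → ℝ) : ℝ :=
  sSup {x : ℝ | ∃ θ : Fin p → ℝ, slopeNorm lam θ ≤ 1 ∧ x = ∑ j, v j * θ j}

/-- Euclidean norm of a vector. -/
noncomputable def enorm2 {n : ℕ} (v : Fin n → ℝ) : ℝ :=
  Real.sqrt (∑ i, (v i) ^ 2)

/-- Number of nonzero entries. -/
noncomputable def l0 {p : ℕ} (u : Fin p → ℝ) : ℕ := Set.ncard {j | u j ≠ 0}

/-- `Λ(λ, s) = (∑_{j=1}^s λ_j²)^{1/2}` (with 0-based indexing: `j < s`). -/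
noncomputable def LamS {p : ℕ} (lam : Fin p → ℝ) (s : ℕ) : ℝ :=
  Real.sqrt (∑ j ∈ Finset.univ.filter (fun j : Fin p => (j : ℕ) < s), (lam j) ^ 2)

/-- `∑_{j=1}^s λ_j |u|^↓_j` (0-based: indices `j < s`). -/
noncomputable def headSum {p : ℕ} (lam : Fin p → ℝ) (s : ℕ) (u : Fin p → ℝ) : ℝ :=
  ∑ j ∈ Finset.univ.filter (fun j : Fin p => (j : ℕ) < s), lam j * dsort u j

/-- `∑_{j=s+1}^p λ_j |u|^↓_j` (0-based: indices `s ≤ j`). -/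
noncomputable def tailSum {p : ℕ} (lam : Fin p → ℝ) (s : ℕ) (u : Fin p → ℝ) : ℝ :=
  ∑ j ∈ Finset.univ.filter (fun j : Fin p => s ≤ (j : ℕ)), lam j * dsort u j

/-- An undirected graph on the vertex set `[n]` with `p` (distinct) edges,
each edge recorded as an ordered pair `(min, max)`. -/
structure GraphOn (n p : ℕ) where
  edge : Fin p → Fin n × Fin n
  lt : ∀ e, (edge e).1 < (edge e).2
  inj : Function.Injective edge

/-- The edge-vertex incidence matrix `Dᵀ ∈ ℝ^{p × n}`:
`(Dᵀ)_{e,v} = +1` if `v = min(i,j)`, `-1` if `v = max(i,j)`, `0` otherwise. -/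
def GraphOn.incT {n p : ℕ} (G : GraphOn n p) : Matrix (Fin p) (Fin n) ℝ :=
  Matrix.of fun e v =>
    if v = (G.edge e).1 then 1 else if v = (G.edge e).2 then -1 else 0

/-- The simple graph associated to a `GraphOn`. -/
def GraphOn.toSimpleGraph {n p : ℕ} (G : GraphOn n p) : SimpleGraph (Fin n) :=
  SimpleGraph.fromRel fun i j => ∃ e, G.edge e = (i, j)

/-- The compatibility factor `κ(s)`. -/
noncomputable def kappa {n p : ℕ} (G : GraphOn n p) (lam : Fin p → ℝ) (s : ℕ) : ℝ :=
  sInf ((fun v : Fin n → ℝ => enorm2 v / enorm2 (G.incT.mulVec v)) ''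
    {v : Fin n → ℝ |
      3 * LamS lam s * enorm2 (G.incT.mulVec v) > tailSum lam s (G.incT.mulVec v)})

/-- The four Penrose conditions: `B` is the Moore–Penrose pseudo-inverse of `A`. -/
def IsMoorePenrose {m k : ℕ} (A : Matrix (Fin m) (Fin k) ℝ)
    (B : Matrix (Fin k) (Fin m) ℝ) : Prop :=
  A * B * A = A ∧ B * A * B = B ∧ (A * B)ᵀ = A * B ∧ (B * A)ᵀ = B * A

/-- `ρ(G) = max_j ‖(Dᵀ)† e_j‖₂`, where `B = (Dᵀ)†`. -/
noncomputable def rhoG {n p : ℕ} (B : Matrix (Fin n) (Fin p) ℝ) : ℝ :=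
  ⨆ j : Fin p, enorm2 (fun i => B i j)

/-- `P` is the matrix of the orthogonal (Euclidean) projection onto `ker Dᵀ`:
symmetric, idempotent, range contained in the kernel, fixing the kernel. -/
def IsOrthProjKer {n p : ℕ} (G : GraphOn n p) (P : Matrix (Fin n) (Fin n) ℝ) : Prop :=
  Pᵀ = P ∧ P * P = P ∧ (∀ v : Fin n → ℝ, G.incT.mulVec (P.mulVec v) = 0) ∧
    ∀ v : Fin n → ℝ, G.incT.mulVec v = 0 → P.mulVec v = v

/-- The Graph-Slope objective `β ↦ (1/(2n))‖y - β‖² + ‖Dᵀβ‖_Λ`. -/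
noncomputable def gslopeObj {n p : ℕ} (G : GraphOn n p) (lam : Fin p → ℝ)
    (y β : Fin n → ℝ) : ℝ :=
  (1 / (2 * (n : ℝ))) * (enorm2 (y - β)) ^ 2 + slopeNorm lam (G.incT.mulVec β)


lemma dsort_nonneg {p : ℕ} (θ : Fin p → ℝ) (j : Fin p) : 0 ≤ dsort θ j := abs_nonneg _

lemma abs_le_dsort_zero {p : ℕ} (hp : 0 < p) (θ : Fin p → ℝ) (i : Fin p) :
    |θ i| ≤ dsort θ ⟨0, hp⟩ := by
  have hm := Tuple.monotone_sort (fun i => |θ i|)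
  set σ := Tuple.sort (fun i => |θ i|) with hσ
  have hle : σ.symm i ≤ (⟨0, hp⟩ : Fin p).rev := by
    rw [Fin.le_def]
    simp [Fin.rev]
    omega
  have := hm hle
  simpa [dsort, ← hσ] using this

lemma sum_dsort_sq {p : ℕ} (θ : Fin p → ℝ) : ∑ j, (dsort θ j) ^ 2 = ∑ j, (θ j) ^ 2 := by
  have h : ∀ j : Fin p, (dsort θ j) ^ 2 =
      (fun k => (θ k) ^ 2) ((Fin.revPerm.trans (Tuple.sort (fun i => |θ i|))) j) := by
    intro j; simp [dsort, sq_abs]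
  rw [Finset.sum_congr rfl (fun j _ => h j)]
  exact Equiv.sum_comp (Fin.revPerm.trans (Tuple.sort (fun i => |θ i|))) (fun k => (θ k) ^ 2)

lemma sort_abs_smul {p : ℕ} (θ : Fin p → ℝ) {c : ℝ} (hc : 0 < c) :
    Tuple.sort (fun i => |c * θ i|) = Tuple.sort (fun i => |θ i|) := by
  symm
  rw [Tuple.eq_sort_iff]
  have hg := Tuple.eq_sort_iff.mp (rfl : Tuple.sort (fun i => |θ i|) = _)
  constructor
  · intro a b hab
    have := hg.1 hab
    simp only [Function.comp] at this ⊢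
    rw [abs_mul, abs_mul, abs_of_pos hc]
    exact mul_le_mul_of_nonneg_left this hc.le
  · intro a b hab heq
    apply hg.2 a b hab
    rw [abs_mul, abs_mul, abs_of_pos hc] at heq
    exact mul_left_cancel₀ hc.ne' heq

lemma dsort_smul {p : ℕ} (θ : Fin p → ℝ) {c : ℝ} (hc : 0 < c) (j : Fin p) :
    dsort (fun i => c * θ i) j = c * dsort θ j := by
  show |(fun i => c * θ i) (Tuple.sort (fun i => |c * θ i|) j.rev)| = _
  rw [sort_abs_smul θ hc]
  simp [dsort, abs_mul, abs_of_pos hc]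

lemma slopeNorm_nonneg {p : ℕ} {lam : Fin p → ℝ} (hnonneg : ∀ j, 0 ≤ lam j)
    (θ : Fin p → ℝ) : 0 ≤ slopeNorm lam θ :=
  Finset.sum_nonneg fun j _ => mul_nonneg (hnonneg j) (dsort_nonneg θ j)

lemma tailSum_nonneg {p : ℕ} {lam : Fin p → ℝ} (hnonneg : ∀ j, 0 ≤ lam j)
    (s : ℕ) (θ : Fin p → ℝ) : 0 ≤ tailSum lam s θ :=
  Finset.sum_nonneg fun j _ => mul_nonneg (hnonneg j) (dsort_nonneg θ j)

lemma slope_split {p : ℕ} (lam : Fin p → ℝ) (s : ℕ) (θ : Fin p → ℝ) :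
    slopeNorm lam θ = headSum lam s θ + tailSum lam s θ := by
  rw [slopeNorm, headSum, tailSum,
    ← Finset.sum_filter_add_sum_filter_not Finset.univ (fun j : Fin p => (j : ℕ) < s)]
  congr 1
  apply Finset.sum_congr _ (fun _ _ => rfl)
  apply Finset.filter_congr
  intro j _
  simp [not_lt]

lemma enorm2_nonneg {n : ℕ} (v : Fin n → ℝ) : 0 ≤ enorm2 v := Real.sqrt_nonneg _

lemma headSum_le {p : ℕ} {lam : Fin p → ℝ} (hnonneg : ∀ j, 0 ≤ lam j)
    (s : ℕ) (θ : Fin p → ℝ) : headSum lam s θ ≤ LamS lam s * enorm2 θ := by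
  set F := Finset.univ.filter (fun j : Fin p => (j : ℕ) < s)
  have hcs := Finset.sum_mul_sq_le_sq_mul_sq F lam (dsort θ)
  have hsub : ∑ j ∈ F, (dsort θ j) ^ 2 ≤ ∑ j, (dsort θ j) ^ 2 :=
    Finset.sum_le_sum_of_subset_of_nonneg (Finset.subset_univ F)
      (fun j _ _ => sq_nonneg _)
  have h1 : (headSum lam s θ) ^ 2 ≤ (∑ j ∈ F, (lam j) ^ 2) * ∑ j, (θ j) ^ 2 := by
    rw [← sum_dsort_sq]
    refine hcs.trans ?_
    exact mul_le_mul_of_nonneg_left hsub (Finset.sum_nonneg fun j _ => sq_nonneg _)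
  have h0 : 0 ≤ headSum lam s θ :=
    Finset.sum_nonneg fun j _ => mul_nonneg (hnonneg j) (dsort_nonneg θ j)
  calc headSum lam s θ = Real.sqrt ((headSum lam s θ) ^ 2) := (Real.sqrt_sq h0).symm
    _ ≤ Real.sqrt ((∑ j ∈ F, (lam j) ^ 2) * ∑ j, (θ j) ^ 2) := Real.sqrt_le_sqrt h1
    _ = LamS lam s * enorm2 θ := by
        rw [Real.sqrt_mul (Finset.sum_nonneg fun j _ => sq_nonneg _)]; rfl

lemma slope_eq_zero_imp {p : ℕ} (hp : 0 < p) {lam : Fin p → ℝ} (hnonneg : ∀ j, 0 ≤ lam j)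
    (hlam0 : 0 < lam ⟨0, hp⟩) {θ : Fin p → ℝ} (h : slopeNorm lam θ = 0) : θ = 0 := by
  have hterm : lam ⟨0, hp⟩ * dsort θ ⟨0, hp⟩ = 0 := by
    have := (Finset.sum_eq_zero_iff_of_nonneg
      (fun j _ => mul_nonneg (hnonneg j) (dsort_nonneg θ j))).mp h ⟨0, hp⟩ (Finset.mem_univ _)
    exact this
  have hd0 : dsort θ ⟨0, hp⟩ = 0 := by
    rcases mul_eq_zero.mp hterm with h' | h'
    · exact absurd h' hlam0.ne'
    · exact h'
  funext i
  have := abs_le_dsort_zero hp θ i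
  rw [hd0] at this
  simpa using abs_nonpos_iff.mp this

lemma dual_pairing_le {p : ℕ} (hp : 0 < p) (lam : Fin p → ℝ) (hnonneg : ∀ j, 0 ≤ lam j)
    (hlam0 : 0 < lam ⟨0, hp⟩) (u θ : Fin p → ℝ) :
    ∑ j, u j * θ j ≤ dualSlopeNorm lam u * slopeNorm lam θ := by
  have hbdd : BddAbove {x : ℝ | ∃ θ : Fin p → ℝ, slopeNorm lam θ ≤ 1 ∧ x = ∑ j, u j * θ j} := by
    refine ⟨∑ j, |u j| * (1 / lam ⟨0, hp⟩), ?_⟩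
    rintro x ⟨θ', hθ', rfl⟩
    have hd0 : dsort θ' ⟨0, hp⟩ ≤ 1 / lam ⟨0, hp⟩ := by
      rw [le_div_iff₀ hlam0, mul_comm]
      refine le_trans ?_ hθ'
      exact Finset.single_le_sum (f := fun j => lam j * dsort θ' j)
        (fun j _ => mul_nonneg (hnonneg j) (dsort_nonneg θ' j)) (Finset.mem_univ _)
    refine Finset.sum_le_sum fun j _ => ?_
    calc u j * θ' j ≤ |u j * θ' j| := le_abs_self _
      _ = |u j| * |θ' j| := abs_mul _ _
      _ ≤ |u j| * (1 / lam ⟨0, hp⟩) :=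
          mul_le_mul_of_nonneg_left ((abs_le_dsort_zero hp θ' j).trans hd0) (abs_nonneg _)
  rcases (slopeNorm_nonneg hnonneg θ).eq_or_lt with h0 | hpos
  · have hz : θ = 0 := slope_eq_zero_imp hp hnonneg hlam0 h0.symm
    subst hz
    rw [← h0, mul_zero]
    simp
  · set t := slopeNorm lam θ with ht
    have hmem : t⁻¹ * ∑ j, u j * θ j ∈
        {x : ℝ | ∃ θ : Fin p → ℝ, slopeNorm lam θ ≤ 1 ∧ x = ∑ j, u j * θ j} := by
      refine ⟨fun i => t⁻¹ * θ i, ?_, ?_⟩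
      · have : slopeNorm lam (fun i => t⁻¹ * θ i) = t⁻¹ * slopeNorm lam θ := by
          rw [slopeNorm, slopeNorm, Finset.mul_sum]
          refine Finset.sum_congr rfl fun j _ => ?_
          rw [dsort_smul θ (inv_pos.mpr hpos) j]; ring
        rw [this, ← ht, inv_mul_cancel₀ hpos.ne']
      · rw [Finset.mul_sum]
        exact Finset.sum_congr rfl fun j _ => by ring
    have hle := le_csSup hbdd hmem
    have : t⁻¹ * ∑ j, u j * θ j ≤ dualSlopeNorm lam u := hle
    calc ∑ j, u j * θ j = t * (t⁻¹ * ∑ j, u j * θ j) := by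
          field_simp
      _ ≤ t * dualSlopeNorm lam u := mul_le_mul_of_nonneg_left this hpos.le
      _ = dualSlopeNorm lam u * slopeNorm lam θ := by rw [mul_comm, ht]

lemma incT_mulVec_apply {n p : ℕ} (G : GraphOn n p) (v : Fin n → ℝ) (e : Fin p) :
    G.incT.mulVec v e = v (G.edge e).1 - v (G.edge e).2 := by
  have hne : (G.edge e).1 ≠ (G.edge e).2 := (G.lt e).ne
  simp only [Matrix.mulVec, dotProduct, GraphOn.incT, Matrix.of_apply]
  have hsum : ∀ i : Fin n,
      (if i = (G.edge e).1 then (1:ℝ) else if i = (G.edge e).2 then -1 else 0) * v i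
      = (if i = (G.edge e).1 then v i else 0) + (if i = (G.edge e).2 then -v i else 0) := by
    intro i
    by_cases h1 : i = (G.edge e).1 <;> by_cases h2 : i = (G.edge e).2
    · exact absurd (h1 ▸ h2) hne
    · simp [h1, h2, hne, Ne.symm hne]
    · simp [h1, h2, hne, Ne.symm hne]
    · simp [h1, h2]
  rw [Finset.sum_congr rfl (fun i _ => hsum i), Finset.sum_add_distrib]
  simp [sub_eq_add_neg]

lemma enorm2_incT_le {n p : ℕ} (G : GraphOn n p) (v : Fin n → ℝ) :
    enorm2 (G.incT.mulVec v) ≤ Real.sqrt (2 * p) * enorm2 v := by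
  have hb : ∀ e : Fin p, (G.incT.mulVec v e) ^ 2 ≤ 2 * ∑ i, (v i) ^ 2 := by
    intro e
    rw [incT_mulVec_apply]
    have hne : (G.edge e).1 ≠ (G.edge e).2 := (G.lt e).ne
    have hpair : (v (G.edge e).1) ^ 2 + (v (G.edge e).2) ^ 2 ≤ ∑ i, (v i) ^ 2 := by
      rw [← Finset.sum_pair (f := fun i => v i ^ 2) hne]
      exact Finset.sum_le_sum_of_subset_of_nonneg (Finset.subset_univ _)
        (fun i _ _ => sq_nonneg _)
    nlinarith [sq_nonneg (v (G.edge e).1 + v (G.edge e).2)]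
  have h3 : ∑ e, (G.incT.mulVec v e) ^ 2 ≤ (2 * p) * ∑ i, (v i) ^ 2 := by
    calc ∑ e, (G.incT.mulVec v e) ^ 2 ≤ ∑ _e : Fin p, 2 * ∑ i, (v i) ^ 2 :=
          Finset.sum_le_sum fun e _ => hb e
      _ = (2 * p) * ∑ i, (v i) ^ 2 := by
          rw [Finset.sum_const, Finset.card_univ, Fintype.card_fin, nsmul_eq_mul]; ring
  calc enorm2 (G.incT.mulVec v) ≤ Real.sqrt ((2 * p) * ∑ i, (v i) ^ 2) :=
        Real.sqrt_le_sqrt h3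
    _ = Real.sqrt (2 * p) * enorm2 v := by
        rw [Real.sqrt_mul (by positivity)]; rfl

lemma proj_eq {n p : ℕ} (G : GraphOn n p) (Ddag : Matrix (Fin p) (Fin n) ℝ)
    (hDdag : IsMoorePenrose G.incTᵀ Ddag) (P : Matrix (Fin n) (Fin n) ℝ)
    (hP : IsOrthProjKer G P) (v : Fin n → ℝ) :
    v - P.mulVec v = (G.incTᵀ * Ddag).mulVec v := by
  obtain ⟨h1, h2, h3, h4⟩ := hDdag
  obtain ⟨hPsym, hPP, hPker, hPfix⟩ := hP
  have hDQ : G.incT * (G.incTᵀ * Ddag) = G.incT := by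
    have h1t : G.incT * (Ddagᵀ * G.incT) = G.incT := by
      have := congrArg Matrix.transpose h1
      simpa [Matrix.transpose_mul, Matrix.transpose_transpose, Matrix.mul_assoc] using this
    have hsw : G.incTᵀ * Ddag = Ddagᵀ * G.incT := by
      calc G.incTᵀ * Ddag = (G.incTᵀ * Ddag)ᵀ := h3.symm
        _ = Ddagᵀ * G.incT := by rw [Matrix.transpose_mul, Matrix.transpose_transpose]
    rw [hsw, h1t]
  have hker : G.incT.mulVec (v - (G.incTᵀ * Ddag).mulVec v) = 0 := by
    rw [Matrix.mulVec_sub, Matrix.mulVec_mulVec, hDQ, sub_self]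
  have hfix := hPfix _ hker
  have hPQ : P.mulVec ((G.incTᵀ * Ddag).mulVec v) = 0 := by
    have e1 : ∀ x : Fin n → ℝ, P.mulVec x ⬝ᵥ P.mulVec x = P.mulVec x ⬝ᵥ x := by
      intro x
      rw [Matrix.dotProduct_mulVec (P.mulVec x) P x]
      congr 1
      calc P.mulVec x ᵥ* P = P.mulVec x ᵥ* Pᵀ := by rw [hPsym]
        _ = P *ᵥ P.mulVec x := Matrix.vecMul_transpose P (P.mulVec x)
        _ = (P * P) *ᵥ x := Matrix.mulVec_mulVec x P P
        _ = P *ᵥ x := by rw [hPP]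
    have e2 : ∀ (y : Fin n → ℝ) (w : Fin p → ℝ),
        P.mulVec y ⬝ᵥ (G.incTᵀ *ᵥ w) = 0 := by
      intro y w
      rw [Matrix.dotProduct_mulVec (P.mulVec y) G.incTᵀ w,
        Matrix.vecMul_transpose G.incT (P.mulVec y), hPker y]
      simp
    apply dotProduct_self_eq_zero.mp
    rw [e1, ← Matrix.mulVec_mulVec v G.incTᵀ Ddag]
    exact e2 _ _
  rw [Matrix.mulVec_sub, hPQ, sub_zero] at hfix
  rw [hfix]
  abel

lemma pairing_eq {n p : ℕ} (G : GraphOn n p) (Ddag : Matrix (Fin p) (Fin n) ℝ)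
    (hsym : (G.incTᵀ * Ddag)ᵀ = G.incTᵀ * Ddag) (ε v : Fin n → ℝ) :
    ε ⬝ᵥ ((G.incTᵀ * Ddag).mulVec v) = (Ddag.mulVec ε) ⬝ᵥ (G.incT.mulVec v) := by
  rw [Matrix.dotProduct_mulVec ε, Matrix.dotProduct_mulVec (Ddag.mulVec ε)]
  congr 1
  calc ε ᵥ* (G.incTᵀ * Ddag) = ε ᵥ* (G.incTᵀ * Ddag)ᵀ := by rw [hsym]
    _ = (G.incTᵀ * Ddag) *ᵥ ε := Matrix.vecMul_transpose _ ε
    _ = G.incTᵀ *ᵥ (Ddag *ᵥ ε) := (Matrix.mulVec_mulVec ε G.incTᵀ Ddag).symm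
    _ = (Ddag *ᵥ ε) ᵥ* (G.incTᵀ)ᵀ := (Matrix.vecMul_transpose G.incTᵀ (Ddag *ᵥ ε)).symm
    _ = (Ddag *ᵥ ε) ᵥ* G.incT := by rw [Matrix.transpose_transpose]


/-- deterministic bound on the event `(1/n)‖D†ε‖* ≤ 1/2`. -/
theorem statement_16 {n p : ℕ} (hn : 0 < n) (hp : 0 < p)
    (G : GraphOn n p) (hconn : G.toSimpleGraph.Connected)
    (lam : Fin p → ℝ) (hmono : Antitone lam) (hnonneg : ∀ j, 0 ≤ lam j) (hne : lam ≠ 0)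
    (s : ℕ) (hs1 : 1 ≤ s) (hsp : s ≤ p)
    (Ddag : Matrix (Fin p) (Fin n) ℝ) (hDdag : IsMoorePenrose G.incTᵀ Ddag)
    (P : Matrix (Fin n) (Fin n) ℝ) (hP : IsOrthProjKer G P)
    (ε : Fin n → ℝ)
    (hε : (1 / (n : ℝ)) * dualSlopeNorm lam (Ddag.mulVec ε) ≤ 1 / 2) :
    ∀ v : Fin n → ℝ, enorm2 v = 1 →
      (∑ i, ε i * (v i - P.mulVec v i)) +
          (n : ℝ) * LamS lam s * enorm2 (G.incT.mulVec v) -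
          (n : ℝ) * tailSum lam s (G.incT.mulVec v) ≤
        3 * (n : ℝ) / 2 * LamS lam s / kappa G lam s := by
  intro v hv
  have hN : (0:ℝ) < n := by exact_mod_cast hn
  set θ := G.incT.mulVec v with hθ
  -- positivity of lam 0 and LamS
  have hlam0 : 0 < lam ⟨0, hp⟩ := by
    obtain ⟨j, hj⟩ := Function.ne_iff.mp hne
    have hjpos : 0 < lam j := lt_of_le_of_ne (hnonneg j) (Ne.symm hj)
    exact lt_of_lt_of_le hjpos (hmono (Fin.mk_le_of_le_val (Nat.zero_le _)))
  have hΛpos : 0 < LamS lam s := by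
    apply Real.sqrt_pos.mpr
    refine lt_of_lt_of_le (pow_pos hlam0 2) ?_
    apply Finset.single_le_sum (f := fun j : Fin p => (lam j) ^ 2)
      (fun j _ => sq_nonneg _)
    simp only [Finset.mem_filter, Finset.mem_univ, true_and]
    omega
  -- pairing identity
  have hE : (∑ i, ε i * (v i - P.mulVec v i)) = (Ddag.mulVec ε) ⬝ᵥ θ := by
    have h0 : (∑ i, ε i * (v i - P.mulVec v i)) = ε ⬝ᵥ (v - P.mulVec v) := by
      simp [dotProduct]
    rw [h0, proj_eq G Ddag hDdag P hP v, pairing_eq G Ddag hDdag.2.2.1 ε v]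
  -- dual norm bound
  have hdual : dualSlopeNorm lam (Ddag.mulVec ε) ≤ (n : ℝ) / 2 := by
    have h' := mul_le_mul_of_nonneg_left hε hN.le
    have e1 : (n : ℝ) * ((1 / n) * dualSlopeNorm lam (Ddag.mulVec ε))
        = dualSlopeNorm lam (Ddag.mulVec ε) := by field_simp
    have e2 : (n : ℝ) * (1 / 2) = n / 2 := by ring
    rw [e1, e2] at h'
    exact h'
  have hpair_le : (Ddag.mulVec ε) ⬝ᵥ θ ≤ ((n : ℝ) / 2) * slopeNorm lam θ := by
    have h1 := dual_pairing_le hp lam hnonneg hlam0 (Ddag.mulVec ε) θ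
    have h2 : (Ddag.mulVec ε) ⬝ᵥ θ = ∑ j, (Ddag.mulVec ε) j * θ j := rfl
    rw [h2]
    exact h1.trans (mul_le_mul_of_nonneg_right hdual (slopeNorm_nonneg hnonneg θ))
  have hhead : headSum lam s θ ≤ LamS lam s * enorm2 θ := headSum_le hnonneg s θ
  have htail : 0 ≤ tailSum lam s θ := tailSum_nonneg hnonneg s θ
  have hsplit := slope_split lam s θ
  have hB0 : 0 ≤ enorm2 θ := enorm2_nonneg θ
  have hEle : (∑ i, ε i * (v i - P.mulVec v i)) ≤
      ((n : ℝ) / 2) * (headSum lam s θ + tailSum lam s θ) := by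
    rw [hE]
    calc (Ddag.mulVec ε) ⬝ᵥ θ ≤ ((n : ℝ) / 2) * slopeNorm lam θ := hpair_le
      _ = ((n : ℝ) / 2) * (headSum lam s θ + tailSum lam s θ) := by rw [hsplit]
  have hheadN : ((n : ℝ) / 2) * headSum lam s θ
      ≤ ((n : ℝ) / 2) * (LamS lam s * enorm2 θ) :=
    mul_le_mul_of_nonneg_left hhead (by positivity)
  by_cases hmem : 3 * LamS lam s * enorm2 θ > tailSum lam s θ
  · -- v is in the compatibility set
    have hmemv : v ∈ {w : Fin n → ℝ |
        3 * LamS lam s * enorm2 (G.incT.mulVec w) > tailSum lam s (G.incT.mulVec w)} := by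
      simpa [← hθ] using hmem
    have hBdd : BddBelow ((fun w : Fin n → ℝ => enorm2 w / enorm2 (G.incT.mulVec w)) ''
        {w : Fin n → ℝ |
          3 * LamS lam s * enorm2 (G.incT.mulVec w) > tailSum lam s (G.incT.mulVec w)}) := by
      refine ⟨0, ?_⟩
      rintro x ⟨w, _, rfl⟩
      exact div_nonneg (enorm2_nonneg w) (enorm2_nonneg _)
    have hκle : kappa G lam s ≤ 1 / enorm2 θ := by
      have h : kappa G lam s ≤ enorm2 v / enorm2 (G.incT *ᵥ v) :=
        csInf_le hBdd ⟨v, hmemv, rfl⟩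
      rw [hv, ← hθ] at h
      exact h
    have hs2p : (0:ℝ) < Real.sqrt (2 * p) := by
      apply Real.sqrt_pos.mpr
      have : (0:ℝ) < (p:ℝ) := by exact_mod_cast hp
      linarith
    have hlb : ∀ x ∈ ((fun w : Fin n → ℝ => enorm2 w / enorm2 (G.incT.mulVec w)) ''
        {w : Fin n → ℝ |
          3 * LamS lam s * enorm2 (G.incT.mulVec w) > tailSum lam s (G.incT.mulVec w)}),
        1 / Real.sqrt (2 * p) ≤ x := by
      rintro x ⟨w, hw, rfl⟩
      have htw : 0 ≤ tailSum lam s (G.incT.mulVec w) := tailSum_nonneg hnonneg s _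
      have hbpos : 0 < enorm2 (G.incT.mulVec w) := by
        by_contra hc
        push_neg at hc
        have hb0 : enorm2 (G.incT.mulVec w) = 0 := le_antisymm hc (enorm2_nonneg _)
        rw [Set.mem_setOf_eq, hb0] at hw
        simp at hw
        linarith
      have hle := enorm2_incT_le G w
      have hwpos : 0 < enorm2 w := by
        by_contra hc
        push_neg at hc
        have hw0 : enorm2 w = 0 := le_antisymm hc (enorm2_nonneg w)
        rw [hw0, mul_zero] at hle
        linarith
      rw [div_le_div_iff₀ hs2p hbpos]
      linarith
    have hκpos : 0 < kappa G lam s := by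
      refine lt_of_lt_of_le (by positivity) (le_csInf ⟨_, ⟨v, hmemv, rfl⟩⟩ hlb)
    have hBpos : 0 < enorm2 θ := by
      rcases hB0.eq_or_lt with h | h
      · rw [← h, mul_zero] at hmem; linarith
      · exact h
    have hBle : enorm2 θ ≤ 1 / kappa G lam s := by
      rw [le_div_iff₀ hκpos]
      have := mul_le_mul_of_nonneg_right hκle hBpos.le
      rw [one_div, inv_mul_cancel₀ hBpos.ne'] at this
      linarith [this]
    have hfin : (3 * (n : ℝ) / 2) * (LamS lam s * enorm2 θ)
        ≤ (3 * (n : ℝ) / 2) * (LamS lam s * (1 / kappa G lam s)) := by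
      apply mul_le_mul_of_nonneg_left _ (by positivity)
      exact mul_le_mul_of_nonneg_left hBle hΛpos.le
    have hrhs : 3 * (n : ℝ) / 2 * LamS lam s / kappa G lam s
        = (3 * (n : ℝ) / 2) * (LamS lam s * (1 / kappa G lam s)) := by
      field_simp
    rw [hrhs]
    nlinarith [hEle, hheadN, htail, hfin, hN]
  · push_neg at hmem
    have hκ0 : 0 ≤ kappa G lam s := by
      apply Real.sInf_nonneg
      rintro x ⟨w, _, rfl⟩
      exact div_nonneg (enorm2_nonneg w) (enorm2_nonneg _)
    have hrhs0 : 0 ≤ 3 * (n : ℝ) / 2 * LamS lam s / kappa G lam s := by positivity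
    have h4 : ((n : ℝ) / 2) * tailSum lam s θ
        ≥ ((n : ℝ) / 2) * (3 * LamS lam s * enorm2 θ) :=
      mul_le_mul_of_nonneg_left hmem (by positivity)
    nlinarith [hEle, hheadN, htail, h4]
end

section
/- Let u ∈ ℝ^p and weights λ_1 ≥ … ≥ λ_p ≥ 0 be such that the sequence (u_1 − λ_1, …, u_p − λ_p) is positive and non-increasing. Then the proximity operator of the ordered ℓ1 norm at u, Prox_{‖·‖_Λ}(u) = argmin_{z ∈ ℝ^p} (1/2)‖u − z‖² + ‖z‖_Λ, equals the solution of the isotonic-type problem argmin_{θ ∈ ℝ^p : θ_1 ≥ θ_2 ≥ … ≥ θ_p ≥ 0} (1/2)‖u − λ − θ‖². -/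
open MeasureTheory ProbabilityTheory Matrix

/-! On non-increasing non-negative vectors the Slope norm is the linear form `⟨λ, ·⟩`, and by the
rearrangement inequality it dominates that linear form everywhere. Hence, with `w = u - λ`, the
prox objective at any `z` exceeds its value at `w` by at least `½‖z - w‖²`, just as for the linear
function `⟨λ, ·⟩`, whose prox at `u` is `u - λ`. The same `w` is feasible for the isotonic problem
with objective `0`, so both minimizers equal `w`. -/

section SlopeNorm

variable {p : ℕ}

lemma dsort_antitone (θ : Fin p → ℝ) : Antitone (dsort θ) := fun _ _ hjk => by
  simpa [dsort] using Tuple.monotone_sort (fun i => |θ i|) (Fin.rev_le_rev.mpr hjk)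

noncomputable def dsortPerm (θ : Fin p → ℝ) : Equiv.Perm (Fin p) :=
  Fin.revPerm.trans (Tuple.sort fun i => |θ i|)

lemma dsort_apply (θ : Fin p → ℝ) (j : Fin p) : dsort θ j = |θ (dsortPerm θ j)| := rfl

lemma sum_mul_le_slopeNorm {lam : Fin p → ℝ} (hmono : Antitone lam) (hnonneg : ∀ j, 0 ≤ lam j)
    (z : Fin p → ℝ) : ∑ j, lam j * z j ≤ slopeNorm lam z :=
  calc ∑ j, lam j * z j
      ≤ ∑ j, lam j * |z j| := by gcongr with j; exacts [hnonneg j, le_abs_self _]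
    _ = ∑ j, lam j * dsort z ((dsortPerm z).symm j) := by
        simp only [dsort_apply, Equiv.apply_symm_apply]
    _ ≤ slopeNorm lam z :=
        (hmono.monovary (dsort_antitone z)).sum_mul_comp_perm_le_sum_mul

lemma slopeNorm_le_sum_mul_of_antitone {lam w : Fin p → ℝ} (hmono : Antitone lam)
    (hw : Antitone w) (hw₀ : ∀ j, 0 ≤ w j) : slopeNorm lam w ≤ ∑ j, lam j * w j := by
  have hsorted : dsort w = w ∘ dsortPerm w := by
    ext j
    exact abs_of_nonneg (hw₀ _)
  rw [slopeNorm, hsorted]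
  exact (hmono.monovary hw).sum_mul_comp_perm_le_sum_mul

end SlopeNorm

section Enorm2

variable {n : ℕ}

lemma enorm2_sq (v : Fin n → ℝ) : enorm2 v ^ 2 = ∑ i, v i ^ 2 :=
  Real.sq_sqrt (Finset.sum_nonneg fun _ _ => sq_nonneg _)

lemma enorm2_eq_zero {v : Fin n → ℝ} : enorm2 v = 0 ↔ v = 0 := by
  rw [enorm2, Real.sqrt_eq_zero (Finset.sum_nonneg fun _ _ => sq_nonneg _),
    Finset.sum_eq_zero_iff_of_nonneg fun _ _ => sq_nonneg _, funext_iff]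
  simp

lemma IsMinOn.eq_of_quadratic_growth {f : (Fin n → ℝ) → ℝ} {s : Set (Fin n → ℝ)}
    {w z : Fin n → ℝ} (hw : w ∈ s) (hgrowth : ∀ z, f w + (1 / 2) * enorm2 (w - z) ^ 2 ≤ f z)
    (hz : IsMinOn f s z) : z = w := by
  have hsq : enorm2 (w - z) ^ 2 ≤ 0 := by linarith [hgrowth z, isMinOn_iff.mp hz w hw]
  have hzero : enorm2 (w - z) = 0 := pow_eq_zero_iff two_ne_zero |>.mp <|
    le_antisymm hsq (sq_nonneg _)
  exact (sub_eq_zero.mp (enorm2_eq_zero.mp hzero)).symm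

end Enorm2

lemma slopeProx_quadratic_growth {p : ℕ} {lam u : Fin p → ℝ} (hmono : Antitone lam)
    (hnonneg : ∀ j, 0 ≤ lam j) (hw : Antitone (u - lam)) (hw₀ : ∀ j, 0 ≤ u j - lam j)
    (z : Fin p → ℝ) :
    (1 / 2) * enorm2 (u - (u - lam)) ^ 2 + slopeNorm lam (u - lam)
        + (1 / 2) * enorm2 (u - lam - z) ^ 2
      ≤ (1 / 2) * enorm2 (u - z) ^ 2 + slopeNorm lam z := by
  have hexpand : (1 / 2) * enorm2 (u - z) ^ 2 + ∑ j, lam j * z j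
      = (1 / 2) * enorm2 (u - (u - lam)) ^ 2 + ∑ j, lam j * (u - lam) j
        + (1 / 2) * enorm2 (u - lam - z) ^ 2 := by
    simp only [enorm2_sq, Finset.mul_sum, ← Finset.sum_add_distrib]
    refine Finset.sum_congr rfl fun j _ => ?_
    simp only [Pi.sub_apply]
    ring
  linarith [slopeNorm_le_sum_mul_of_antitone hmono hw hw₀, sum_mul_le_slopeNorm hmono hnonneg z]

theorem statement_19_general {p : ℕ} (lam : Fin p → ℝ)
    (hmono : Antitone lam) (hnonneg : ∀ j, 0 ≤ lam j)
    (u : Fin p → ℝ)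
    (hpos : ∀ j, 0 < u j - lam j) (hdec : Antitone fun j => u j - lam j)
    (z θ : Fin p → ℝ)
    (hz : IsMinOn (fun z' : Fin p → ℝ => (1 / 2) * (enorm2 (u - z')) ^ 2 + slopeNorm lam z')
      Set.univ z)
    (hθ : IsMinOn (fun θ' : Fin p → ℝ => (1 / 2) * (enorm2 (u - lam - θ')) ^ 2)
      {θ' : Fin p → ℝ | Antitone θ' ∧ ∀ j, 0 ≤ θ' j} θ) :
    z = θ := by
  have hw : u - lam ∈ {θ' : Fin p → ℝ | Antitone θ' ∧ ∀ j, 0 ≤ θ' j} :=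
    ⟨hdec, fun j => (hpos j).le⟩
  have hz_eq : z = u - lam := hz.eq_of_quadratic_growth (Set.mem_univ _)
    (slopeProx_quadratic_growth hmono hnonneg hw.1 hw.2)
  have hθ_eq : θ = u - lam := hθ.eq_of_quadratic_growth hw fun θ' => by
    simp [enorm2_eq_zero.mpr rfl]
  rw [hz_eq, hθ_eq]

/-- when `u - λ` is positive and non-increasing, the proximity operator
of the Slope norm at `u` coincides with the solution of the isotonic-type problem. -/
theorem statement_19 {p : ℕ} (lam : Fin p → ℝ)
    (hmono : Antitone lam) (hnonneg : ∀ j, 0 ≤ lam j) (hne : lam ≠ 0)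
    (u : Fin p → ℝ)
    (hpos : ∀ j, 0 < u j - lam j) (hdec : Antitone fun j => u j - lam j)
    (z θ : Fin p → ℝ)
    (hz : IsMinOn (fun z' : Fin p → ℝ => (1 / 2) * (enorm2 (u - z')) ^ 2 + slopeNorm lam z')
      Set.univ z)
    (hθmem : θ ∈ {θ' : Fin p → ℝ | Antitone θ' ∧ ∀ j, 0 ≤ θ' j})
    (hθ : IsMinOn (fun θ' : Fin p → ℝ => (1 / 2) * (enorm2 (u - lam - θ')) ^ 2)
      {θ' : Fin p → ℝ | Antitone θ' ∧ ∀ j, 0 ≤ θ' j} θ) :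
    z = θ :=
  statement_19_general lam hmono hnonneg u hpos hdec z θ hz hθ
end
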